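/- If the dual problem satisfies the error bound property with constants M > 0 and κ > 0, then the dual function satisfies the strong-convexity-like inequality f* − d(x) ≥ (L_d/(2κ²)) · ‖x − [x]_{X*}‖² for every x ∈ K* with f* − d(x) ≤ M. -/

import Mathlib

/-!
One projected gradient ascent step `y = [z + (1/L_d) ∇d(z)]_{K*}` from `z ∈ K*` raises the dual
value by at least `(L_d/2) ‖y - z‖²`: the projection inequality gives
`⟪∇d(z), y - z⟫ ≥ L_d ‖y - z‖²`, and strong convexity of `L(·, z)` yields the descent lemma
`d(y) ≥ d(z) + ⟪∇d(z), y - z⟫ - (L_d/2) ‖y - z‖²`. By weak duality `d(y) ≤ f*`, so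
`f* - d(z) ≥ (L_d/2) ‖∇⁺d(z)‖²`, and the error bound gives `‖∇⁺d(z)‖ ≥ ‖z - [z]_{X*}‖ / κ`.
-/

open scoped RealInnerProductSpace
open Filter Topology

variable {E F : Type*} [NormedAddCommGroup E] [InnerProductSpace ℝ E]
  [NormedAddCommGroup F] [InnerProductSpace ℝ F]

lemma StrongConvexOn.subset {s t : Set E} {m : ℝ} {f : E → ℝ} (hf : StrongConvexOn t m f)
    (hst : s ⊆ t) (hs : Convex ℝ s) : StrongConvexOn s m f :=
  ⟨hs, fun _ hx _ hy => hf.2 (hst hx) (hst hy)⟩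

lemma StrongConvexOn.add_sq_norm_sub_le_of_isMinOn {s : Set E} {m : ℝ} {φ : E → ℝ} {u v : E}
    (hφ : StrongConvexOn s m φ) (hmin : IsMinOn φ s u) (hu : u ∈ s) (hv : v ∈ s) :
    φ u + m / 2 * ‖v - u‖ ^ 2 ≤ φ v := by
  have hsegment : ∀ t ∈ Set.Ioo (0 : ℝ) 1, φ u + (1 - t) * (m / 2 * ‖v - u‖ ^ 2) ≤ φ v := by
    rintro t ⟨ht0, ht1⟩
    have hconv := hφ.2 hu hv (sub_nonneg.2 ht1.le) ht0.le (sub_add_cancel 1 t)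
    have hmin' := hmin (hφ.1 hu hv (sub_nonneg.2 ht1.le) ht0.le (sub_add_cancel 1 t))
    rw [norm_sub_rev] at hconv
    simp only [smul_eq_mul, Set.mem_ofPred_eq] at hconv hmin'
    nlinarith
  have hcont : Continuous fun t : ℝ => φ u + (1 - t) * (m / 2 * ‖v - u‖ ^ 2) := by fun_prop
  refine le_of_tendsto ?_ (eventually_of_mem (Ioo_mem_nhdsGT one_pos) hsegment)
  simpa using (hcont.tendsto 0).mono_left nhdsWithin_le_nhds

lemma real_inner_sub_le_zero_of_forall_norm_sub_le {C : Set F} (hC : Convex ℝ C) {u y : F}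
    (hy : y ∈ C) (hproj : ∀ w ∈ C, ‖u - y‖ ≤ ‖u - w‖) : ∀ w ∈ C, ⟪u - y, w - y⟫ ≤ 0 := by
  have : Nonempty C := ⟨⟨y, hy⟩⟩
  refine (norm_eq_iInf_iff_real_inner_le_zero hC hy).1 (le_antisymm ?_ ?_)
  · exact le_ciInf fun w => hproj w w.2
  · exact ciInf_le ⟨0, Set.forall_mem_range.2 fun w : C => norm_nonneg (u - w)⟩ ⟨y, hy⟩

lemma sq_norm_sub_le_inner_of_forall_norm_sub_le {C : Set F} (hC : Convex ℝ C) {z y D : F}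
    (t : ℝ) (hz : z ∈ C) (hy : y ∈ C) (hproj : ∀ w ∈ C, ‖z + t • D - y‖ ≤ ‖z + t • D - w‖) :
    ‖y - z‖ ^ 2 ≤ t * ⟪D, y - z⟫ := by
  have hVI := real_inner_sub_le_zero_of_forall_norm_sub_le hC hy hproj z hz
  have hsplit : z + t • D - y = t • D - (y - z) := by abel
  rw [hsplit, inner_sub_left, real_inner_smul_left, ← neg_sub y z, inner_neg_right,
    inner_neg_right, real_inner_self_eq_norm_sq] at hVI
  linarith

lemma mul_le_half_mul_sq_add_sq_div {σ : ℝ} (hσ : 0 < σ) (a b : ℝ) :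
    a * b ≤ σ / 2 * a ^ 2 + b ^ 2 / σ / 2 := by
  rw [← mul_le_mul_iff_of_pos_left (by positivity : 0 < 2 * σ)]
  calc 2 * σ * (a * b) = 2 * (σ * a) * b := by ring
    _ ≤ (σ * a) ^ 2 + b ^ 2 := two_mul_le_add_sq _ _
    _ = 2 * σ * (σ / 2 * a ^ 2 + b ^ 2 / σ / 2) := by field_simp

lemma convex_setOf_forall_inner_nonneg (K : Set F) : Convex ℝ {x : F | ∀ v ∈ K, 0 ≤ ⟪x, v⟫} := by
  intro x hx y hy a b ha hb _ v hv
  rw [inner_add_left, real_inner_smul_left, real_inner_smul_left]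
  exact add_nonneg (mul_nonneg ha (hx v hv)) (mul_nonneg hb (hy v hv))

def lagrangian (f : E → ℝ) (G : E →L[ℝ] F) (g x : F) (u : E) : ℝ := f u + ⟪x, -G u - g⟫

section Lagrangian

variable {f : E → ℝ} {G : E →L[ℝ] F} {g : F} {U : Set E} {σ : ℝ}

lemma lagrangian_eq_add_inner_sub (x y : F) (u : E) :
    lagrangian f G g x u = lagrangian f G g y u + ⟪x - y, -G u - g⟫ := by
  simp only [lagrangian, inner_sub_left]
  ring

lemma StrongConvexOn.lagrangian (hf : StrongConvexOn U σ f) (x : F) :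
    StrongConvexOn U σ (lagrangian f G g x) := by
  refine ⟨hf.1, fun u hu v hv a b ha hb hab => ?_⟩
  obtain rfl : b = 1 - a := by linarith
  have hlin : ⟪x, -G (a • u + (1 - a) • v) - g⟫
      = a * ⟪x, -G u - g⟫ + (1 - a) * ⟪x, -G v - g⟫ := by
    rw [← real_inner_smul_right, ← real_inner_smul_right, ← inner_add_right, map_add, map_smul,
      map_smul]
    congr 1
    module
  have hconv := hf.2 hu hv ha hb hab
  simp only [_root_.lagrangian, smul_eq_mul] at hconv ⊢
  rw [hlin]
  linarith

lemma lagrangian_le_of_mem_dual {K : Set F} {x : F} (hx : ∀ v ∈ K, 0 ≤ ⟪x, v⟫) {ux u : E}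
    (hmin : IsMinOn (lagrangian f G g x) U ux) (hu : u ∈ U) (hfeas : G u + g ∈ K) :
    lagrangian f G g x ux ≤ f u := by
  calc lagrangian f G g x ux ≤ lagrangian f G g x u := hmin hu
    _ = f u - ⟪x, G u + g⟫ := by rw [lagrangian, ← neg_add', inner_neg_right, sub_eq_add_neg]
    _ ≤ f u := sub_le_self _ (hx _ hfeas)

lemma lagrangian_descent (hf : StrongConvexOn U σ f) (hσ : 0 < σ) {x y : F} {ux uy : E}
    (hux : ux ∈ U) (hmin : IsMinOn (lagrangian f G g x) U ux) (huy : uy ∈ U) :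
    lagrangian f G g x ux + ⟪-G ux - g, y - x⟫ - ‖G‖ ^ 2 / σ / 2 * ‖y - x‖ ^ 2
      ≤ lagrangian f G g y uy := by
  have hgrowth := (hf.lagrangian x).add_sq_norm_sub_le_of_isMinOn hmin hux huy
  have hshift : ⟪x - y, -G uy - g⟫ = -⟪-G ux - g, y - x⟫ + ⟪y - x, G (uy - ux)⟫ := by
    simp only [map_sub, inner_sub_left, inner_sub_right, inner_neg_right,
      real_inner_comm x, real_inner_comm y]
    ring
  have hcross : ⟪y - x, G (uy - ux)⟫ ≤ σ / 2 * ‖uy - ux‖ ^ 2 + ‖G‖ ^ 2 / σ / 2 * ‖y - x‖ ^ 2 :=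
    calc ⟪y - x, G (uy - ux)⟫ ≤ ‖y - x‖ * ‖G (uy - ux)‖ := real_inner_le_norm _ _
      _ ≤ ‖y - x‖ * (‖G‖ * ‖uy - ux‖) := by gcongr; exact G.le_opNorm _
      _ = ‖uy - ux‖ * (‖G‖ * ‖y - x‖) := by ring
      _ ≤ σ / 2 * ‖uy - ux‖ ^ 2 + (‖G‖ * ‖y - x‖) ^ 2 / σ / 2 :=
        mul_le_half_mul_sq_add_sq_div hσ _ _
      _ = σ / 2 * ‖uy - ux‖ ^ 2 + ‖G‖ ^ 2 / σ / 2 * ‖y - x‖ ^ 2 := by ring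
  rw [lagrangian_eq_add_inner_sub x y uy, hshift] at hgrowth
  linarith

theorem half_mul_sq_norm_sub_le_lagrangian_sub (hf : StrongConvexOn U σ f) (hσ : 0 < σ)
    (hG : G ≠ 0) {C : Set F} (hC : Convex ℝ C) {z y : F} {uz uy : E} (hz : z ∈ C) (hy : y ∈ C)
    (hproj : ∀ w ∈ C, ‖z + (1 / (‖G‖ ^ 2 / σ)) • (-G uz - g) - y‖
      ≤ ‖z + (1 / (‖G‖ ^ 2 / σ)) • (-G uz - g) - w‖)
    (huz : uz ∈ U) (hminz : IsMinOn (lagrangian f G g z) U uz) (huy : uy ∈ U) :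
    ‖G‖ ^ 2 / σ / 2 * ‖y - z‖ ^ 2 ≤ lagrangian f G g y uy - lagrangian f G g z uz := by
  have hL : 0 < ‖G‖ ^ 2 / σ := by have := norm_pos_iff.2 hG; positivity
  have hstep := sq_norm_sub_le_inner_of_forall_norm_sub_le hC _ hz hy hproj
  have hinner : ‖G‖ ^ 2 / σ * ‖y - z‖ ^ 2 ≤ ⟪-G uz - g, y - z⟫ := by
    rwa [← le_div_iff₀' hL, ← one_div_mul_eq_div]
  have hdesc := lagrangian_descent (y := y) hf hσ huz hminz huy
  linarith

end Lagrangian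

theorem stmt_13_general {n p : ℕ}
    (f : EuclideanSpace ℝ (Fin n) → ℝ) (σf : ℝ) (hσf : 0 < σf)
    (hfsc : StrongConvexOn Set.univ σf f)
    (U : Set (EuclideanSpace ℝ (Fin n))) (hUcv : Convex ℝ U)
    (G : EuclideanSpace ℝ (Fin n) →L[ℝ] EuclideanSpace ℝ (Fin p)) (hG : G ≠ 0) (g : EuclideanSpace ℝ (Fin p))
    (K : Set (EuclideanSpace ℝ (Fin p)))
    (Kstar : Set (EuclideanSpace ℝ (Fin p)))
    (hKstar : Kstar = {x : EuclideanSpace ℝ (Fin p) | ∀ v ∈ K, 0 ≤ ⟪x, v⟫})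
    (Lag : EuclideanSpace ℝ (Fin n) → EuclideanSpace ℝ (Fin p) → ℝ)
    (hLag : ∀ u x, Lag u x = f u + ⟪x, -(G u) - g⟫)
    (uu : EuclideanSpace ℝ (Fin p) → EuclideanSpace ℝ (Fin n))
    (huu : ∀ x : EuclideanSpace ℝ (Fin p), uu x ∈ U ∧ ∀ u ∈ U, Lag (uu x) x ≤ Lag u x)
    (d : EuclideanSpace ℝ (Fin p) → ℝ) (hd : ∀ x, d x = Lag (uu x) x)
    (ustar : EuclideanSpace ℝ (Fin n))
    (hustar : ustar ∈ U ∧ G ustar + g ∈ K ∧ ∀ u ∈ U, G u + g ∈ K → f ustar ≤ f u)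
    (fstar : ℝ) (hfstar : fstar = f ustar)
    (Ld : ℝ) (hLd : Ld = ‖G‖ ^ 2 / σf)
    (projKs : EuclideanSpace ℝ (Fin p) → EuclideanSpace ℝ (Fin p))
    (hprojKs : ∀ z : EuclideanSpace ℝ (Fin p), projKs z ∈ Kstar ∧ ∀ w ∈ Kstar, ‖z - projKs z‖ ≤ ‖z - w‖)
    (gmap : EuclideanSpace ℝ (Fin p) → EuclideanSpace ℝ (Fin p))
    (hgmap : ∀ z : EuclideanSpace ℝ (Fin p), gmap z = projKs (z + (1 / Ld) • (-(G (uu z)) - g)) - z)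
    (projX : EuclideanSpace ℝ (Fin p) → EuclideanSpace ℝ (Fin p))
    (M κ : ℝ) (hκ : 0 < κ)
    (hEB : ∀ z ∈ Kstar, fstar - d z ≤ M → ‖z - projX z‖ ≤ κ * ‖gmap z‖) :
    ∀ z ∈ Kstar, fstar - d z ≤ M →
      fstar - d z ≥ Ld / (2 * κ ^ 2) * ‖z - projX z‖ ^ 2 := by
  obtain rfl : Lag = fun u x => lagrangian f G g x u := funext₂ hLag
  subst hKstar hLd hfstar
  intro z hz hMz
  have hmin : ∀ x, IsMinOn (lagrangian f G g x) U (uu x) := fun x => isMinOn_iff.2 (huu x).2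
  obtain ⟨hyK, hyproj⟩ := hprojKs (z + (1 / (‖G‖ ^ 2 / σf)) • (-G (uu z) - g))
  set y := projKs (z + (1 / (‖G‖ ^ 2 / σf)) • (-G (uu z) - g))
  have hascent := half_mul_sq_norm_sub_le_lagrangian_sub (hfsc.subset (Set.subset_univ U) hUcv)
    hσf hG (convex_setOf_forall_inner_nonneg K) hz hyK hyproj (huu z).1 (hmin z) (huu y).1
  have hweak := lagrangian_le_of_mem_dual hyK (hmin y) hustar.1 hustar.2.1
  have hEBz : ‖z - projX z‖ ≤ κ * ‖y - z‖ := hgmap z ▸ hEB z hz hMz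
  rw [ge_iff_le, hd]
  calc ‖G‖ ^ 2 / σf / (2 * κ ^ 2) * ‖z - projX z‖ ^ 2
      ≤ ‖G‖ ^ 2 / σf / (2 * κ ^ 2) * (κ * ‖y - z‖) ^ 2 := by gcongr
    _ = ‖G‖ ^ 2 / σf / 2 * ‖y - z‖ ^ 2 := by field_simp
    _ ≤ f ustar - lagrangian f G g z (uu z) := by linarith

theorem stmt_13 {n p : ℕ}
    (f : EuclideanSpace ℝ (Fin n) → ℝ) (σf : ℝ) (hσf : 0 < σf)
    (hfc : Continuous f) (hfsc : StrongConvexOn Set.univ σf f)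
    (U : Set (EuclideanSpace ℝ (Fin n))) (hUne : U.Nonempty) (hUcl : IsClosed U) (hUcv : Convex ℝ U)
    (G : EuclideanSpace ℝ (Fin n) →L[ℝ] EuclideanSpace ℝ (Fin p)) (hG : G ≠ 0) (g : EuclideanSpace ℝ (Fin p))
    (K : Set (EuclideanSpace ℝ (Fin p))) (hKne : K.Nonempty) (hKcl : IsClosed K) (hKcv : Convex ℝ K)
    (hKcone : ∀ c : ℝ, 0 ≤ c → ∀ v ∈ K, c • v ∈ K)
    (Kstar : Set (EuclideanSpace ℝ (Fin p)))
    (hKstar : Kstar = {x : EuclideanSpace ℝ (Fin p) | ∀ v ∈ K, 0 ≤ ⟪x, v⟫})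
    (Lag : EuclideanSpace ℝ (Fin n) → EuclideanSpace ℝ (Fin p) → ℝ)
    (hLag : ∀ u x, Lag u x = f u + ⟪x, -(G u) - g⟫)
    (uu : EuclideanSpace ℝ (Fin p) → EuclideanSpace ℝ (Fin n))
    (huu : ∀ x : EuclideanSpace ℝ (Fin p), uu x ∈ U ∧ ∀ u ∈ U, Lag (uu x) x ≤ Lag u x)
    (d : EuclideanSpace ℝ (Fin p) → ℝ) (hd : ∀ x, d x = Lag (uu x) x)
    (ustar : EuclideanSpace ℝ (Fin n))
    (hustar : ustar ∈ U ∧ G ustar + g ∈ K ∧ ∀ u ∈ U, G u + g ∈ K → f ustar ≤ f u)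
    (fstar : ℝ) (hfstar : fstar = f ustar)
    (Xstar : Set (EuclideanSpace ℝ (Fin p))) (hXstar : Xstar = {x ∈ Kstar | d x = fstar})
    (hXne : Xstar.Nonempty)
    (Ld : ℝ) (hLd : Ld = ‖G‖ ^ 2 / σf)
    (projKs : EuclideanSpace ℝ (Fin p) → EuclideanSpace ℝ (Fin p))
    (hprojKs : ∀ z : EuclideanSpace ℝ (Fin p), projKs z ∈ Kstar ∧ ∀ w ∈ Kstar, ‖z - projKs z‖ ≤ ‖z - w‖)
    (gmap : EuclideanSpace ℝ (Fin p) → EuclideanSpace ℝ (Fin p))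
    (hgmap : ∀ z : EuclideanSpace ℝ (Fin p), gmap z = projKs (z + (1 / Ld) • (-(G (uu z)) - g)) - z)
    (projX : EuclideanSpace ℝ (Fin p) → EuclideanSpace ℝ (Fin p))
    (hprojX : ∀ z : EuclideanSpace ℝ (Fin p), projX z ∈ Xstar ∧ ∀ w ∈ Xstar, ‖z - projX z‖ ≤ ‖z - w‖)
    (M κ : ℝ) (hM : 0 < M) (hκ : 0 < κ)
    (hEB : ∀ z ∈ Kstar, fstar - d z ≤ M → ‖z - projX z‖ ≤ κ * ‖gmap z‖) :
    ∀ z ∈ Kstar, fstar - d z ≤ M →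
      fstar - d z ≥ Ld / (2 * κ ^ 2) * ‖z - projX z‖ ^ 2 :=
  stmt_13_general f σf hσf hfsc U hUcv G hG g K Kstar hKstar Lag hLag uu huu d hd ustar hustar fstar
    hfstar Ld hLd projKs hprojKs gmap hgmap projX M κ hκ hEB
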